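/- Let R be a commutative ring and q ∈ R. For all natural numbers n and s: ([s]_q)^n = \sum_{k=0}^{n} S_q(n,k) * [s]_{q,k}, where [s]_{q,k} = \prod_{i=0}^{k-1} [s-i]_q is the q-falling factorial. -/

import Mathlib

/-- The q-integer [n]_q. -/
def qInt {R : Type*} [CommRing R] (q : R) (n : ℕ) : R :=
  ∑ i ∈ Finset.range n, q ^ i

/-- The q-Stirling numbers of the second kind. -/
def qStirling {R : Type*} [CommRing R] (q : R) : ℕ → ℕ → R
  | 0, 0 => 1
  | 0, _ + 1 => 0
  | _ + 1, 0 => 0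
  | n + 1, k + 1 => q ^ k * qStirling q n k + qInt q (k + 1) * qStirling q n (k + 1)

/-!
Multiplying the q-falling factorial `[s]_{q,k}` by `[s]_q = [k]_q + q^k [s-k]_q` gives
`[k]_q [s]_{q,k} + q^k [s]_{q,k+1}`, which is exactly the transposed Stirling recurrence;
so `[s]_q^n` and `∑ₖ S_q(n,k) [s]_{q,k}` satisfy the same recursion in `n`.
-/

open Finset

section

variable {R : Type*} [CommRing R] (q : R)

def qFallingFactorial (s k : ℕ) : R :=
  ∏ i ∈ range k, qInt q (s - i)

@[simp]
lemma qInt_zero : qInt q 0 = 0 := by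
  simp [qInt]

lemma qInt_add (a b : ℕ) : qInt q (a + b) = qInt q a + q ^ a * qInt q b := by
  simp only [qInt, sum_range_add, mul_sum, pow_add]

@[simp]
lemma qStirling_succ_zero (n : ℕ) : qStirling q (n + 1) 0 = 0 := rfl

lemma qStirling_succ_succ (n k : ℕ) :
    qStirling q (n + 1) (k + 1) =
      q ^ k * qStirling q n k + qInt q (k + 1) * qStirling q n (k + 1) := rfl

lemma qStirling_eq_zero_of_lt {n k : ℕ} (h : n < k) : qStirling q n k = 0 := by
  induction n generalizing k with
  | zero => obtain ⟨k, rfl⟩ := Nat.exists_eq_add_one_of_ne_zero h.ne'; rfl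
  | succ n ih =>
    obtain ⟨k, rfl⟩ := Nat.exists_eq_add_one_of_ne_zero (n.succ_pos.trans h).ne'
    rw [qStirling_succ_succ, ih (by omega), ih (by omega), mul_zero, mul_zero, add_zero]

lemma sum_range_qStirling_succ_mul (n : ℕ) (g : ℕ → R) :
    ∑ k ∈ range (n + 2), qStirling q (n + 1) k * g k =
      ∑ k ∈ range (n + 1), qStirling q n k * (qInt q k * g k + q ^ k * g (k + 1)) := by
  have shifted : ∑ k ∈ range (n + 1), qInt q (k + 1) * qStirling q n (k + 1) * g (k + 1) =
      ∑ k ∈ range (n + 1), qInt q k * qStirling q n k * g k := by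
    have h₀ := sum_range_succ' (fun k => qInt q k * qStirling q n k * g k) (n + 1)
    have h₁ := sum_range_succ (fun k => qInt q k * qStirling q n k * g k) (n + 1)
    simp only [qInt_zero, qStirling_eq_zero_of_lt q n.lt_succ_self, zero_mul, mul_zero,
      add_zero] at h₀ h₁
    rw [← h₀, h₁]
  rw [sum_range_succ', qStirling_succ_zero, zero_mul, add_zero]
  simp only [qStirling_succ_succ, add_mul, sum_add_distrib, shifted, mul_add]
  rw [add_comm]
  congr 1 <;> refine sum_congr rfl fun k _ => by ring

lemma qFallingFactorial_succ (s k : ℕ) :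
    qFallingFactorial q s (k + 1) = qFallingFactorial q s k * qInt q (s - k) :=
  prod_range_succ _ _

lemma qFallingFactorial_eq_zero_of_lt {s k : ℕ} (h : s < k) : qFallingFactorial q s k = 0 :=
  prod_eq_zero (mem_range.mpr h) (by simp)

lemma qInt_mul_qFallingFactorial (s k : ℕ) :
    qInt q s * qFallingFactorial q s k =
      qInt q k * qFallingFactorial q s k + q ^ k * qFallingFactorial q s (k + 1) := by
  rcases le_or_gt k s with h | h
  · obtain ⟨m, rfl⟩ := Nat.exists_eq_add_of_le h
    rw [qFallingFactorial_succ, Nat.add_sub_cancel_left, qInt_add]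
    ring
  · rw [qFallingFactorial_eq_zero_of_lt q h, qFallingFactorial_eq_zero_of_lt q (by omega)]
    ring

end

/-- Expansion of powers of q-integers via q-Stirling numbers and q-falling factorials. -/
theorem qInt_pow_eq_sum_qStirling {R : Type*} [CommRing R] (q : R) (n s : ℕ) :
    (qInt q s) ^ n =
      ∑ k ∈ Finset.range (n + 1),
        qStirling q n k * ∏ i ∈ Finset.range k, qInt q (s - i) := by
  change _ = ∑ k ∈ range (n + 1), qStirling q n k * qFallingFactorial q s k
  induction n with
  | zero => simp [qStirling, qFallingFactorial]
  | succ n ih =>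
    rw [sum_range_qStirling_succ_mul, pow_succ', ih, mul_sum]
    refine sum_congr rfl fun k _ => ?_
    rw [mul_left_comm, qInt_mul_qFallingFactorial]
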